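/- The partial derivative of the squared-error loss of the Gaussian-kernel Nadaraya-Watson estimator with respect to an off-diagonal bandwidth entry is bounded: if |y| ≤ M, |Yᵢ| ≤ M for all i, and ‖Xᵢ‖ ≤ B, ‖x‖ ≤ B, then for u ≠ v, |∂/∂H_{uv} [(ψ_H(x) - y)²]| ≤ 64 M² B², where ψ_H(x) = ∑ᵢ k_{i,H}(x) Yᵢ / ∑ᵢ k_{i,H}(x) with k_{i,H}(x) = exp(-(Xᵢ-x)ᵀH(Xᵢ-x)), and the derivative equals 4(ψ_H(x) - y) · ∑ᵢ (ψ_H(x) - Yᵢ) k_{i,H}(x) (X_{iu} - x_u)(X_{iv} - x_v) / ∑ᵢ k_{i,H}(x). -/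

import Mathlib

open Matrix

lemma coord_le_norm_aux {p : ℕ} (f : EuclideanSpace ℝ (Fin p)) (j : Fin p) : |f j| ≤ ‖f‖ := by
  rw [EuclideanSpace.norm_eq, ← Real.sqrt_sq_eq_abs]
  apply Real.sqrt_le_sqrt
  have := Finset.single_le_sum (f := fun i => ‖f i‖ ^ 2) (fun i _ => sq_nonneg _)
    (Finset.mem_univ j)
  simpa [Real.norm_eq_abs, sq_abs] using this

theorem stmt16 {n p : ℕ} (hn : 1 ≤ n) (u v : Fin p) (huv : u ≠ v)
    (X : Fin n → EuclideanSpace ℝ (Fin p)) (Y : Fin n → ℝ) (x : EuclideanSpace ℝ (Fin p))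
    (y M B : ℝ) (hy : |y| ≤ M) (hY : ∀ i, |Y i| ≤ M)
    (hX : ∀ i, ‖X i‖ ≤ B) (hx : ‖x‖ ≤ B)
    (H : Matrix (Fin p) (Fin p) ℝ) (hH : H.IsSymm) :
    -- the bandwidth matrix as a function of the (u,v) = (v,u) entry t
    let Hmat : ℝ → Matrix (Fin p) (Fin p) ℝ := fun t i j =>
      if (i = u ∧ j = v) ∨ (i = v ∧ j = u) then t else H i j
    let k : ℝ → Fin n → ℝ := fun t i =>
      Real.exp (-((fun j => X i j - x j) ⬝ᵥ (Hmat t).mulVec (fun j => X i j - x j)))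
    let ψ : ℝ → ℝ := fun t => (∑ i, k t i * Y i) / (∑ i, k t i)
    let D : ℝ → ℝ := fun t =>
      4 * (ψ t - y) *
        (∑ i, (ψ t - Y i) * k t i * (X i u - x u) * (X i v - x v)) / (∑ i, k t i)
    ∀ t : ℝ, HasDerivAt (fun s => (ψ s - y) ^ 2) (D t) t ∧ |D t| ≤ 64 * M ^ 2 * B ^ 2 := by
  intro Hmat k ψ D t
  have hn' : 0 < n := hn
  haveI : Nonempty (Fin n) := ⟨⟨0, hn'⟩⟩
  have hM : 0 ≤ M := le_trans (abs_nonneg y) hy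
  have hB : 0 ≤ B := le_trans (norm_nonneg x) hx
  have hkpos : ∀ s i, 0 < k s i := fun s i => Real.exp_pos _
  have hden : ∀ s, 0 < ∑ i, k s i :=
    fun s => Finset.sum_pos (fun i _ => hkpos s i) Finset.univ_nonempty
  set c : Fin n → ℝ := fun i => (X i u - x u) * (X i v - x v) with hc
  -- derivative of the quadratic form
  have hquad : ∀ i, HasDerivAt
      (fun s => (fun j => X i j - x j) ⬝ᵥ (Hmat s).mulVec (fun j => X i j - x j))
      (2 * c i) t := by
    intro i
    have h1 : (fun s => (fun j => X i j - x j) ⬝ᵥ (Hmat s).mulVec (fun j => X i j - x j))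
        = fun s => ∑ jj, (X i jj - x jj) * ∑ l, Hmat s jj l * (X i l - x l) := by
      funext s
      simp [dotProduct, Matrix.mulVec]
    rw [h1]
    have key : ∀ jj : Fin p, HasDerivAt
        (fun s => (X i jj - x jj) * ∑ l, Hmat s jj l * (X i l - x l))
        ((X i jj - x jj) *
          ((if jj = u then X i v - x v else 0) + (if jj = v then X i u - x u else 0))) t := by
      intro jj
      apply HasDerivAt.const_mul
      have hterm : ∀ l : Fin p, HasDerivAt (fun s => Hmat s jj l * (X i l - x l))
          (if (jj = u ∧ l = v) ∨ (jj = v ∧ l = u) then X i l - x l else 0) t := by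
        intro l
        simp only [Hmat]
        by_cases hcase : (jj = u ∧ l = v) ∨ (jj = v ∧ l = u)
        · simp only [hcase, if_true]
          simpa using (hasDerivAt_id t).mul_const (X i l - x l)
        · simp only [hcase, if_false]
          exact hasDerivAt_const t _
      have hsum := HasDerivAt.fun_sum (fun l (_ : l ∈ Finset.univ) => hterm l)
      convert hsum using 1
      · rfl
      by_cases hju : jj = u
      · have hjv : jj ≠ v := by rw [hju]; exact huv
        simp [hju, hjv, huv, Ne.symm huv, Finset.sum_ite_eq']
      · by_cases hjv : jj = v
        · simp [hju, hjv, Ne.symm huv, Finset.sum_ite_eq']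
        · simp [hju, hjv]
    have hsum2 := HasDerivAt.fun_sum (fun jj (_ : jj ∈ Finset.univ) => key jj)
    convert hsum2 using 1
    · rfl
    · rfl
    rw [hc]
    simp only [mul_add, mul_ite, mul_zero, Finset.sum_add_distrib, Finset.sum_ite_eq',
      Finset.mem_univ, if_true]
    ring
  -- derivative of k
  have hk : ∀ i, HasDerivAt (fun s => k s i) (k t i * (-(2 * c i))) t := by
    intro i
    simp only [k]
    exact ((hquad i).neg).exp
  have hnum : HasDerivAt (fun s => ∑ i, k s i * Y i)
      (∑ i, k t i * (-(2 * c i)) * Y i) t :=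
    HasDerivAt.fun_sum (fun i _ => (hk i).mul_const (Y i))
  have hden' : HasDerivAt (fun s => ∑ i, k s i) (∑ i, k t i * (-(2 * c i))) t :=
    HasDerivAt.fun_sum (fun i _ => hk i)
  have hψ : HasDerivAt ψ
      (((∑ i, k t i * (-(2 * c i)) * Y i) * (∑ i, k t i)
        - (∑ i, k t i * Y i) * (∑ i, k t i * (-(2 * c i)))) / (∑ i, k t i) ^ 2) t := by
    simp only [ψ]
    exact hnum.div hden' (ne_of_gt (hden t))
  have hψval : ψ t = (∑ i, k t i * Y i) / (∑ i, k t i) := rfl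
  -- rewrite sums
  have e1 : (∑ i, k t i * (-(2 * c i)) * Y i) = (-2) * ∑ i, k t i * Y i * c i := by
    rw [Finset.mul_sum]
    exact Finset.sum_congr rfl (fun i _ => by ring)
  have e2 : (∑ i, k t i * (-(2 * c i))) = (-2) * ∑ i, k t i * c i := by
    rw [Finset.mul_sum]
    exact Finset.sum_congr rfl (fun i _ => by ring)
  have e3 : (∑ i, (ψ t - Y i) * k t i * (X i u - x u) * (X i v - x v))
      = ψ t * (∑ i, k t i * c i) - ∑ i, k t i * Y i * c i := by
    rw [Finset.mul_sum, ← Finset.sum_sub_distrib]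
    refine Finset.sum_congr rfl (fun i _ => ?_)
    simp only [hc]
    ring
  -- bounds preliminaries
  have habsd : ∀ (i : Fin n) (j : Fin p), |X i j - x j| ≤ 2 * B := by
    intro i j
    calc |X i j - x j| ≤ |X i j| + |x j| := abs_sub _ _
      _ ≤ ‖X i‖ + ‖x‖ := add_le_add (coord_le_norm_aux (X i) j) (coord_le_norm_aux x j)
      _ ≤ 2 * B := by linarith [hX i, hx]
  have hNle : |∑ i, k t i * Y i| ≤ M * ∑ i, k t i := by
    calc |∑ i, k t i * Y i| ≤ ∑ i, |k t i * Y i| := Finset.abs_sum_le_sum_abs _ _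
      _ ≤ ∑ i, k t i * M := Finset.sum_le_sum (fun i _ => by
          rw [abs_mul, abs_of_pos (hkpos t i)]
          exact mul_le_mul_of_nonneg_left (hY i) (le_of_lt (hkpos t i)))
      _ = M * ∑ i, k t i := by
          rw [Finset.mul_sum]
          exact Finset.sum_congr rfl (fun i _ => mul_comm _ _)
  have hψM : |ψ t| ≤ M := by
    rw [hψval, abs_div, abs_of_pos (hden t), div_le_iff₀ (hden t)]
    exact hNle
  have hS : |∑ i, (ψ t - Y i) * k t i * (X i u - x u) * (X i v - x v)|
      ≤ 2 * M * (2 * B) * (2 * B) * ∑ i, k t i := by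
    calc |∑ i, (ψ t - Y i) * k t i * (X i u - x u) * (X i v - x v)|
        ≤ ∑ i, |(ψ t - Y i) * k t i * (X i u - x u) * (X i v - x v)| :=
          Finset.abs_sum_le_sum_abs _ _
      _ ≤ ∑ i, 2 * M * (2 * B) * (2 * B) * k t i := by
          refine Finset.sum_le_sum (fun i _ => ?_)
          rw [abs_mul, abs_mul, abs_mul, abs_of_pos (hkpos t i)]
          have h1 : |ψ t - Y i| ≤ 2 * M := by
            calc |ψ t - Y i| ≤ |ψ t| + |Y i| := abs_sub _ _
              _ ≤ 2 * M := by linarith [hY i]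
          have h2 := habsd i u
          have h3 := habsd i v
          have hk0 := le_of_lt (hkpos t i)
          calc |ψ t - Y i| * k t i * |X i u - x u| * |X i v - x v|
              ≤ 2 * M * k t i * |X i u - x u| * |X i v - x v| := by
                apply mul_le_mul_of_nonneg_right _ (abs_nonneg _)
                apply mul_le_mul_of_nonneg_right _ (abs_nonneg _)
                exact mul_le_mul_of_nonneg_right h1 hk0
            _ ≤ 2 * M * k t i * (2 * B) * (2 * B) := by
                have hnn : 0 ≤ 2 * M * k t i := by positivity
                have step1 : 2 * M * k t i * |X i u - x u| ≤ 2 * M * k t i * (2 * B) :=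
                  mul_le_mul_of_nonneg_left h2 hnn
                have hnn2 : 0 ≤ 2 * M * k t i * (2 * B) := by positivity
                calc 2 * M * k t i * |X i u - x u| * |X i v - x v|
                    ≤ 2 * M * k t i * (2 * B) * |X i v - x v| :=
                      mul_le_mul_of_nonneg_right step1 (abs_nonneg _)
                  _ ≤ 2 * M * k t i * (2 * B) * (2 * B) :=
                      mul_le_mul_of_nonneg_left h3 hnn2
            _ = 2 * M * (2 * B) * (2 * B) * k t i := by ring
      _ = 2 * M * (2 * B) * (2 * B) * ∑ i, k t i := (Finset.mul_sum _ _ _).symm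
  have hψy : |ψ t - y| ≤ 2 * M := by
    calc |ψ t - y| ≤ |ψ t| + |y| := abs_sub _ _
      _ ≤ 2 * M := by linarith
  constructor
  · have h2 := ((hψ.sub_const y).fun_pow 2)
    convert h2 using 1
    · rfl
    · rfl
    simp only [D]
    rw [e1, e2, e3, hψval]
    have hd0 : (∑ i, k t i) ≠ 0 := ne_of_gt (hden t)
    field_simp
    ring_nf
    field_simp
  · have hDval : D t = 4 * (ψ t - y) *
        (∑ i, (ψ t - Y i) * k t i * (X i u - x u) * (X i v - x v)) / (∑ i, k t i) := rfl
    rw [hDval, abs_div, abs_of_pos (hden t), div_le_iff₀ (hden t)]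
    rw [abs_mul, abs_mul]
    have h4 : |(4 : ℝ)| = 4 := by norm_num
    rw [h4]
    have key := mul_le_mul hψy hS (abs_nonneg _) (by linarith : (0 : ℝ) ≤ 2 * M)
    calc 4 * |ψ t - y| * |∑ i, (ψ t - Y i) * k t i * (X i u - x u) * (X i v - x v)|
        ≤ 4 * (2 * M * (2 * M * (2 * B) * (2 * B) * ∑ i, k t i)) := by linarith
      _ = 64 * M ^ 2 * B ^ 2 * ∑ i, k t i := by ring
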